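/- arXiv:0705.4324 — 3 statements merged into one kernel-verified Lean document; each statement's English description precedes it below -/
import Mathlib

section
/- Let T/U be an extension of number fields, x ∈ T, and let 𝔗 = n_T(x) be the numerator divisor of x. Let 𝔄 be an integral divisor of U such that 𝔗² divides 𝔄 in the semigroup of integral divisors of T. Let t ∈ U be such that 𝔄 divides the numerator divisor n_T(x − t). Then 𝔗 can be considered as a divisor of U; i.e., for every prime 𝔭 of T with ord_𝔭(x) > 0 one has ord_𝔭(x) = ord_𝔭(t), and the same holds at every conjugate of 𝔭 over U. -/
/-!
At a prime `𝔭` of `T` with `ord_𝔭 x = k > 0` the hypotheses give `ord_𝔭 𝔄 ≥ 2k` and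
`ord_𝔭 (x - t) ≥ ord_𝔭 𝔄 > k`, so `t` has order `k` at `𝔭` by the ultrametric inequality.
Since `𝔄` comes from `U`, its order is also positive at every conjugate `σ⁻¹ 𝔭`; there `t` still
has positive order because `σ` fixes it, hence so does `x = (x - t) + t`, and the first argument
applies at `σ⁻¹ 𝔭`. Finally `ord_𝔭 (σ x) = ord_{σ⁻¹ 𝔭} x`.
-/

open NumberField IsDedekindDomain Multiplicative

/-- `w` is a place of `T` lying above the place `v` of `U`. -/
def LiesAbove {U T : Type*} [Field U] [NumberField U] [Field T] [NumberField T] [Algebra U T]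
    (w : HeightOneSpectrum (𝓞 T)) (v : HeightOneSpectrum (𝓞 U)) : Prop :=
  v.asIdeal = Ideal.comap (algebraMap (𝓞 U) (𝓞 T)) w.asIdeal

namespace Valuation

variable {K Γ₀ : Type*} [Field K] [LinearOrderedCommGroupWithZero Γ₀] {v : Valuation K Γ₀}
  {x y : K} {c : Γ₀}

theorem lt_one_iff_of_le_sq_of_sub_le (h1 : c ≤ min (v x) 1 ^ 2) (h2 : min (v (x - y)) 1 ≤ c) :
    v x < 1 ↔ c < 1 ∧ v y < 1 := by
  have hsub (hc : c < 1) : v (x - y) < 1 :=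
    ((min_le_iff.mp h2).resolve_right hc.not_ge).trans_lt hc
  constructor
  · intro hx
    have hc : c < 1 := h1.trans_lt (pow_lt_one₀ zero_le (min_lt_of_left_lt hx) two_ne_zero)
    refine ⟨hc, ?_⟩
    calc v y = v (x - (x - y)) := by rw [sub_sub_cancel]
      _ ≤ max (v x) (v (x - y)) := v.map_sub x (x - y)
      _ < 1 := max_lt hx (hsub hc)
  · rintro ⟨hc, hy⟩
    calc v x = v (x - y + y) := by rw [sub_add_cancel]
      _ ≤ max (v (x - y)) (v y) := v.map_add _ _
      _ < 1 := max_lt (hsub hc) hy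

theorem map_eq_of_le_sq_of_sub_le (h1 : c ≤ min (v x) 1 ^ 2) (h2 : min (v (x - y)) 1 ≤ c)
    (hx : v x < 1) : v y = v x := by
  rw [min_eq_left hx.le] at h1
  have hc : c < 1 := h1.trans_lt (pow_lt_one₀ zero_le hx two_ne_zero)
  have hxy : v (x - y) ≤ v x ^ 2 := ((min_le_iff.mp h2).resolve_right hc.not_ge).trans h1
  rcases eq_or_ne (v x) 0 with hx0 | hx0
  · rw [hx0, zero_pow two_ne_zero, le_zero_iff, map_eq_zero, sub_eq_zero] at hxy
    rw [hxy]
  · have hlt : v (x - y) < v x :=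
      hxy.trans_lt (pow_lt_self_of_lt_one₀ (zero_lt_iff.2 hx0) hx one_lt_two)
    rw [← v.map_sub_eq_of_lt_left hlt, sub_sub_cancel]

end Valuation

theorem WithZero.exp_neg_natCast_lt_one_iff {n : ℕ} : WithZero.exp (-(n : ℤ)) < 1 ↔ n ≠ 0 := by
  rw [← WithZero.exp_zero, WithZero.exp_lt_exp]
  omega

namespace IsDedekindDomain.HeightOneSpectrum

open Pointwise

variable {R : Type*} [CommRing R] {G : Type*} [Group G] [MulSemiringAction G R]

instance : MulAction G (HeightOneSpectrum R) where
  smul g v := ⟨g • v.asIdeal, inferInstance,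
    fun h => v.ne_bot (MulAction.injective g (h.trans (Ideal.smul_bot g).symm))⟩
  one_smul v := HeightOneSpectrum.ext (one_smul G v.asIdeal)
  mul_smul g h v := HeightOneSpectrum.ext (mul_smul g h v.asIdeal)

@[simp]
theorem smul_asIdeal (g : G) (v : HeightOneSpectrum R) : (g • v).asIdeal = g • v.asIdeal := rfl

variable [IsDedekindDomain R]

theorem intValuation_smul (g : G) (v : HeightOneSpectrum R) (r : R) :
    (g • v).intValuation (g • r) = v.intValuation r := by
  rcases eq_or_ne r 0 with rfl | hr
  · simp
  rw [intValuation_eq_exp_neg_multiplicity _ hr,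
    intValuation_eq_exp_neg_multiplicity _ ((smul_ne_zero_iff_ne g).2 hr), smul_asIdeal,
    ← Set.smul_set_singleton, ← Ideal.smul_closure]
  congr 3
  exact multiplicity_map_eq (MulSemiringAction.toRingEquiv G (Ideal R) g)

theorem valuation_smul {K : Type*} [Field K] [Algebra R K] [IsFractionRing R K]
    [MulSemiringAction G K] [SMulDistribClass G R K] (g : G) (v : HeightOneSpectrum R) (y : K) :
    (g • v).valuation K (g • y) = v.valuation K y := by
  obtain ⟨r, s, -, rfl⟩ := IsFractionRing.div_surjective (A := R) y
  rw [smul_div₀', ← algebraMap.smul', ← algebraMap.smul', map_div₀, map_div₀,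
    valuation_of_algebraMap, valuation_of_algebraMap, valuation_of_algebraMap,
    valuation_of_algebraMap, intValuation_smul, intValuation_smul]

end IsDedekindDomain.HeightOneSpectrum

section NumberField

open Pointwise

variable {U T : Type*} [Field U] [NumberField U] [Field T] [NumberField T] [Algebra U T]

instance : SMulCommClass (T ≃ₐ[U] T) (𝓞 U) (𝓞 T) where
  smul_comm σ a r := RingOfIntegers.ext <| by
    simp [Algebra.smul_def, algebraMap.smul', ← IsScalarTower.algebraMap_apply (𝓞 U) (𝓞 T) T,
      IsScalarTower.algebraMap_apply (𝓞 U) U T]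

theorem LiesAbove.smul {w : HeightOneSpectrum (𝓞 T)} {v : HeightOneSpectrum (𝓞 U)}
    (h : LiesAbove w v) (σ : T ≃ₐ[U] T) : LiesAbove (σ • w) v :=
  have : w.asIdeal.LiesOver v.asIdeal := ⟨h⟩
  (inferInstance : (σ • w.asIdeal).LiesOver v.asIdeal).over

theorem ne_zero_iff_of_liesAbove {A : HeightOneSpectrum (𝓞 T) → ℕ}
    {B : HeightOneSpectrum (𝓞 U) → ℕ}
    (hAB : ∀ w v, LiesAbove w v → A w = Ideal.ramificationIdx' v.asIdeal w.asIdeal * B v)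
    {w : HeightOneSpectrum (𝓞 T)} {v : HeightOneSpectrum (𝓞 U)} (h : LiesAbove w v) :
    A w ≠ 0 ↔ B v ≠ 0 := by
  have : w.asIdeal.LiesOver v.asIdeal := ⟨h⟩
  rw [hAB w v h, mul_ne_zero_iff,
    and_iff_right (Ideal.IsDedekindDomain.ramificationIdx'_ne_zero_of_liesOver w.asIdeal v.ne_bot)]

end NumberField

theorem stmt3_general (U T : Type*) [Field U] [NumberField U] [Field T] [NumberField T] [Algebra U T]
    (x : T) (t : U)
    (A : HeightOneSpectrum (𝓞 T) → ℕ)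
    -- `𝔄` is (the `T`-factorization of) an integral divisor of `U`:
    (B : HeightOneSpectrum (𝓞 U) → ℕ)
    (hAB : ∀ (w : HeightOneSpectrum (𝓞 T)) (v : HeightOneSpectrum (𝓞 U)), LiesAbove w v →
      A w = Ideal.ramificationIdx' v.asIdeal w.asIdeal * B v)
    -- `n_T(x)²` divides `𝔄` in the semigroup of integral divisors of `T`:
    (h1 : ∀ w : HeightOneSpectrum (𝓞 T),
      ((ofAdd (-(A w : ℤ)) : Multiplicative ℤ) : WithZero (Multiplicative ℤ)) ≤
        (min (w.valuation T x) 1) ^ 2)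
    -- `𝔄` divides `n_T(x − t)`:
    (h2 : ∀ w : HeightOneSpectrum (𝓞 T),
      min (w.valuation T (x - algebraMap U T t)) 1 ≤
        ((ofAdd (-(A w : ℤ)) : Multiplicative ℤ) : WithZero (Multiplicative ℤ))) :
    ∀ w : HeightOneSpectrum (𝓞 T), w.valuation T x < 1 →
      ∀ σ : T ≃ₐ[U] T,
        w.valuation T (σ x) < 1 ∧ w.valuation T (σ x) = w.valuation T (algebraMap U T t) := by
  intro w hw σ
  have hσ (y : T) : w.valuation T (σ y) = (σ⁻¹ • w).valuation T y := by
    conv_lhs => rw [← smul_inv_smul σ w]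
    exact HeightOneSpectrum.valuation_smul σ (σ⁻¹ • w) y
  have ht : (σ⁻¹ • w).valuation T (algebraMap U T t) = w.valuation T (algebraMap U T t) := by
    rw [← hσ, σ.commutes]
  obtain ⟨hAw, htw⟩ := (Valuation.lt_one_iff_of_le_sq_of_sub_le (h1 w) (h2 w)).1 hw
  have hv : LiesAbove w (HeightOneSpectrum.under (𝓞 U) w) := rfl
  have hAw' : A (σ⁻¹ • w) ≠ 0 := (ne_zero_iff_of_liesAbove hAB (hv.smul σ⁻¹)).2
    ((ne_zero_iff_of_liesAbove hAB hv).1 (WithZero.exp_neg_natCast_lt_one_iff.1 hAw))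
  have hw' : (σ⁻¹ • w).valuation T x < 1 :=
    (Valuation.lt_one_iff_of_le_sq_of_sub_le (h1 _) (h2 _)).2
      ⟨WithZero.exp_neg_natCast_lt_one_iff.2 hAw', ht ▸ htw⟩
  rw [hσ, ← ht]
  exact ⟨hw', (Valuation.map_eq_of_le_sq_of_sub_le (h1 _) (h2 _) hw').symm⟩

/-- Let `T/U` be an extension of number fields, `x ∈ T` nonzero and `𝔄` an integral
divisor of `U`, recorded by its multiplicity function `A` on the primes of `T` (so `A` is the
`T`-factorization of a divisor `B` of `U`, multiplicities multiplying by ramification indices).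
If `n_T(x)² ∣ 𝔄` and `𝔄 ∣ n_T(x − t)` for some `t ∈ U`, then at every prime `𝔭` of `T` with
`ord_𝔭 x > 0` (i.e. `valuation < 1`) one has `ord_𝔭 x = ord_𝔭 t > 0`, and likewise at every
conjugate of `𝔭` over `U` (expressed by applying any `σ ∈ Aut(T/U)` to `x`). -/
theorem stmt3 (U T : Type*) [Field U] [NumberField U] [Field T] [NumberField T] [Algebra U T]
    (x : T) (hx : x ≠ 0) (t : U)
    (A : HeightOneSpectrum (𝓞 T) → ℕ)
    (hAfin : {w : HeightOneSpectrum (𝓞 T) | A w ≠ 0}.Finite)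
    -- `𝔄` is (the `T`-factorization of) an integral divisor of `U`:
    (B : HeightOneSpectrum (𝓞 U) → ℕ)
    (hAB : ∀ (w : HeightOneSpectrum (𝓞 T)) (v : HeightOneSpectrum (𝓞 U)), LiesAbove w v →
      A w = Ideal.ramificationIdx' v.asIdeal w.asIdeal * B v)
    -- `n_T(x)²` divides `𝔄` in the semigroup of integral divisors of `T`:
    (h1 : ∀ w : HeightOneSpectrum (𝓞 T),
      ((ofAdd (-(A w : ℤ)) : Multiplicative ℤ) : WithZero (Multiplicative ℤ)) ≤
        (min (w.valuation T x) 1) ^ 2)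
    -- `𝔄` divides `n_T(x − t)`:
    (h2 : ∀ w : HeightOneSpectrum (𝓞 T),
      min (w.valuation T (x - algebraMap U T t)) 1 ≤
        ((ofAdd (-(A w : ℤ)) : Multiplicative ℤ) : WithZero (Multiplicative ℤ))) :
    ∀ w : HeightOneSpectrum (𝓞 T), w.valuation T x < 1 →
      ∀ σ : T ≃ₐ[U] T,
        w.valuation T (σ x) < 1 ∧ w.valuation T (σ x) = w.valuation T (algebraMap U T t) :=
  stmt3_general U T x t A B hAB h1 h2
end

section
/- Let G be a number field, x, y ∈ O_G with x² − d·y² = 1 for some d ∈ O_G, and let δ be a square root of d in the algebraic closure of ℚ. If ξ = x − δ·y is a root of unity, then ξ⁴ = 1. -/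
open NumberField

/-! Since `(x - δy)(x + δy) = x² - dy² = 1`, the root of unity `ξ` satisfies `ξ² - 2xξ + 1 = 0`,
i.e. `2x = ξ + ξ⁻¹`. Under any embedding `G → ℂ`, extended to the algebraic closure, `x` therefore
becomes the real part of a root of unity: all conjugates of the algebraic integer `x` are real and
lie in `[-1, 1]`. By Kronecker's theorem `x = 0` or `x` is a root of unity, and a real root of unity
is `±1`. If `x = 0` then `ξ² = -1`; if `x² = 1` then `(ξ - x)² = 0`, so `ξ = x = ±1`. -/

theorem sq_sub_two_mul_add_one_eq_zero_of_sq_sub_mul_sq_eq_one {R : Type*} [CommRing R]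
    {a b c δ : R} (hδ : δ ^ 2 = c) (h : a ^ 2 - c * b ^ 2 = 1) :
    (a - δ * b) ^ 2 - 2 * a * (a - δ * b) + 1 = 0 := by
  linear_combination b ^ 2 * hδ - h

theorem pow_four_eq_one_of_sq_sub_two_mul_add_one_eq_zero {R : Type*} [CommRing R] [IsDomain R]
    {a ξ : R} (h : ξ ^ 2 - 2 * a * ξ + 1 = 0) (ha : a = 0 ∨ a ^ 2 = 1) : ξ ^ 4 = 1 := by
  rcases ha with rfl | ha
  · linear_combination (ξ ^ 2 - 1) * h
  · have hsq : (ξ - a) ^ 2 = 0 := by linear_combination h + ha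
    rw [sub_eq_zero.mp (pow_eq_zero_iff two_ne_zero |>.mp hsq)]
    linear_combination (a ^ 2 + 1) * ha

theorem Complex.eq_re_of_sq_sub_two_mul_add_one_eq_zero {z w : ℂ} (hz : ‖z‖ = 1)
    (h : z ^ 2 - 2 * w * z + 1 = 0) : w = z.re := by
  have hz0 : z ≠ 0 := norm_ne_zero_iff.mp (hz ▸ one_ne_zero)
  have h2w : 2 * w = z + z⁻¹ := by
    field_simp
    linear_combination -h
  have h2re : 2 * w = 2 * (z.re : ℂ) := by
    rw [h2w, Complex.inv_eq_conj hz, Complex.add_conj]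
    push_cast
    ring
  exact mul_left_cancel₀ two_ne_zero h2re

theorem exists_abs_le_one_map_eq_of_sq_sub_two_mul_add_one_eq_zero {K L : Type*} [Field K]
    [Field L] [Algebra K L] [Algebra.IsAlgebraic K L] {a : K} {ξ : L} {n : ℕ} (hn : 0 < n)
    (hξn : ξ ^ n = 1) (h : ξ ^ 2 - 2 * algebraMap K L a * ξ + 1 = 0) (φ : K →+* ℂ) :
    ∃ r : ℝ, |r| ≤ 1 ∧ φ a = r := by
  let _ : Algebra K ℂ := φ.toAlgebra
  let ψ : L →ₐ[K] ℂ := IsAlgClosed.lift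
  have hzn : ψ ξ ^ n = 1 := by rw [← map_pow, hξn, map_one]
  have hz : ‖ψ ξ‖ = 1 := Complex.norm_eq_one_of_pow_eq_one hzn hn.ne'
  have hψ : ψ ξ ^ 2 - 2 * φ a * ψ ξ + 1 = 0 := by
    simpa only [map_add, map_sub, map_mul, map_pow, map_one, map_zero, map_ofNat, AlgHom.commutes,
      RingHom.algebraMap_toAlgebra]
      using congr_arg ψ h
  exact ⟨(ψ ξ).re, (Complex.abs_re_le_norm _).trans hz.le,
    Complex.eq_re_of_sq_sub_two_mul_add_one_eq_zero hz hψ⟩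

theorem NumberField.eq_zero_or_sq_eq_one_of_forall_embedding_eq_ofReal_abs_le_one {K : Type*} [Field K]
    [NumberField K] {x : K} (hxi : IsIntegral ℤ x)
    (hx : ∀ φ : K →+* ℂ, ∃ r : ℝ, |r| ≤ 1 ∧ φ x = r) : x = 0 ∨ x ^ 2 = 1 := by
  refine or_iff_not_imp_left.mpr fun hx₀ => ?_
  obtain ⟨n, hn, hxn⟩ := Embeddings.pow_eq_one_of_norm_le_one K ℂ hx₀ hxi fun φ => by
    obtain ⟨r, hr, hφ⟩ := hx φ
    rwa [hφ, Complex.norm_real, Real.norm_eq_abs]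
  obtain ⟨φ⟩ : Nonempty (K →+* ℂ) := inferInstance
  obtain ⟨r, -, hφ⟩ := hx φ
  have hrn : r ^ n = 1 := by
    have hφn := congr_arg φ hxn
    rw [map_pow, hφ, map_one] at hφn
    exact_mod_cast hφn
  have hr2 : r ^ 2 = 1 := by
    rcases (pow_eq_one_iff_of_ne_zero hn.ne').mp hrn with rfl | ⟨rfl, -⟩ <;> norm_num
  apply φ.injective
  rw [map_pow, hφ, map_one]
  exact_mod_cast hr2

/-- Let `G` be a number field, `x, y ∈ O_G` with `x² − d y² = 1` for some `d ∈ O_G`,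
and let `δ` be a square root of `d` in the algebraic closure.  If `ξ = x − δ y` is a root of
unity, then `ξ⁴ = 1`. -/
theorem stmt8 (G : Type*) [Field G] [NumberField G]
    (x y d : 𝓞 G) (hxy : x ^ 2 - d * y ^ 2 = 1)
    (δ : AlgebraicClosure G) (hδ : δ ^ 2 = algebraMap G (AlgebraicClosure G) (d : G))
    (ξ : AlgebraicClosure G)
    (hξ : ξ = algebraMap G (AlgebraicClosure G) (x : G) -
      δ * algebraMap G (AlgebraicClosure G) (y : G))
    (hroot : ∃ n : ℕ, 0 < n ∧ ξ ^ n = 1) :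
    ξ ^ 4 = 1 := by
  obtain ⟨n, hn, hξn⟩ := hroot
  set f := algebraMap G (AlgebraicClosure G)
  have hquad : ξ ^ 2 - 2 * f x * ξ + 1 = 0 := by
    rw [hξ]
    have hxy' : (x : G) ^ 2 - (d : G) * (y : G) ^ 2 = 1 := by
      exact_mod_cast congr_arg ((↑) : 𝓞 G → G) hxy
    refine sq_sub_two_mul_add_one_eq_zero_of_sq_sub_mul_sq_eq_one hδ ?_
    simpa only [map_sub, map_mul, map_pow, map_one] using congr_arg f hxy'
  have hx : (x : G) = 0 ∨ (x : G) ^ 2 = 1 :=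
    eq_zero_or_sq_eq_one_of_forall_embedding_eq_ofReal_abs_le_one (RingOfIntegers.isIntegral_coe x)
    (exists_abs_le_one_map_eq_of_sq_sub_two_mul_add_one_eq_zero hn hξn hquad)
  refine pow_four_eq_one_of_sq_sub_two_mul_add_one_eq_zero hquad ?_
  rcases hx with hx | hx
  · exact Or.inl (by rw [hx, map_zero])
  · exact Or.inr (by rw [← map_pow, hx, map_one])
end

section
/- Let K be a number field and E, G two nontrivial Galois extensions of K with coprime degrees ([E:K],[G:K]) = 1. Let 𝔭_K be a prime of K with no factor of relative degree one in E, and let 𝔭_G be a prime of G above 𝔭_K. Then 𝔭_G has no factor of relative degree one in the compositum GE. -/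
open NumberField IsDedekindDomain

/-!
Let `w` be a prime of `GE` above `𝔭_G` with `f(w/𝔭_G) = 1`, and `𝔭_E` the prime of `E` below it.
Multiplicativity of inertia degrees in the towers `K ⊆ E ⊆ GE` and `K ⊆ G ⊆ GE` gives
`f(𝔭_E/𝔭_K) ∣ f(𝔭_G/𝔭_K)`. In a Galois extension the inertia degree divides the degree
(fundamental identity `r e f = n`), so `f(𝔭_E/𝔭_K)` divides both `[E:K]` and `[G:K]`, hence is `1`.
-/

namespace Ideal

theorem inertiaDeg_dvd_card_of_isGaloisGroup {A B : Type*} [CommRing A] [IsDomain A]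
    [CommRing B] [IsDomain B] [Algebra A B] [Module.Finite A B] [Module.Flat A B]
    (p : Ideal A) [p.IsPrime] (P : Ideal B) [P.IsPrime] [P.LiesOver p]
    (G : Type*) [Group G] [Finite G] [MulSemiringAction G B] [IsGaloisGroup G A B] :
    P.inertiaDeg A ∣ Nat.card G := by
  rw [← inertiaDegIn_eq_inertiaDeg p P G,
    ← ncard_primesOver_mul_ramificationIdxIn_mul_inertiaDegIn p B G]
  exact (dvd_mul_left _ _).mul_left _

theorem inertiaDeg'_dvd_of_inertiaDeg'_eq_one {R S S' T : Type*} [CommRing R] [CommRing S]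
    [CommRing S'] [CommRing T] [Algebra R S] [Algebra S T] [Algebra R T] [IsScalarTower R S T]
    [Algebra R S'] [Algebra S' T] [IsScalarTower R S' T]
    (p : Ideal R) (P : Ideal S) (P' : Ideal S') (Q : Ideal T) [p.IsMaximal] [P.IsMaximal]
    [P'.IsMaximal] [P.LiesOver p] [P'.LiesOver p] [Q.LiesOver P] [Q.LiesOver P']
    (h : inertiaDeg' P' Q = 1) : inertiaDeg' p P ∣ inertiaDeg' p P' :=
  ⟨inertiaDeg' P Q, by
    rw [← inertiaDeg'_algebra_tower, inertiaDeg'_algebra_tower p P' Q, h, mul_one]⟩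

end Ideal

namespace NumberField

theorem inertiaDeg'_dvd_finrank {K E : Type*} [Field K] [Field E] [NumberField K]
    [NumberField E] [Algebra K E] [IsGalois K E] (p : Ideal (𝓞 K)) (P : Ideal (𝓞 E))
    [P.IsMaximal] [P.LiesOver p] : Ideal.inertiaDeg' p P ∣ Module.finrank K E := by
  have : p.IsMaximal := .of_isMaximal_liesOver P p
  rw [Ideal.inertiaDeg'_eq_inertiaDeg, ← IsGalois.card_aut_eq_finrank]
  exact Ideal.inertiaDeg_dvd_card_of_isGaloisGroup p P Gal(E/K)

end NumberField

theorem stmt9_general (K E G L : Type*) [Field K] [Field E] [Field G] [Field L]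
    [NumberField K] [NumberField E] [NumberField G] [NumberField L]
    [Algebra K E] [Algebra K G] [Algebra K L] [Algebra E L] [Algebra G L]
    [IsScalarTower K E L] [IsScalarTower K G L]
    [IsGalois K E] [IsGalois K G]
    (hcop : Nat.Coprime (Module.finrank K E) (Module.finrank K G))
    (pK : HeightOneSpectrum (𝓞 K))
    (hnodeg1 : ∀ w : HeightOneSpectrum (𝓞 E),
      pK.asIdeal = Ideal.comap (algebraMap (𝓞 K) (𝓞 E)) w.asIdeal →
      Ideal.inertiaDeg' pK.asIdeal w.asIdeal ≠ 1)
    (pG : HeightOneSpectrum (𝓞 G))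
    (habove : pK.asIdeal = Ideal.comap (algebraMap (𝓞 K) (𝓞 G)) pG.asIdeal) :
    ∀ w : HeightOneSpectrum (𝓞 L),
      pG.asIdeal = Ideal.comap (algebraMap (𝓞 G) (𝓞 L)) w.asIdeal →
      Ideal.inertiaDeg' pG.asIdeal w.asIdeal ≠ 1 := by
  intro w hw hdeg
  let pE := w.asIdeal.under (𝓞 E)
  have : pG.asIdeal.LiesOver pK.asIdeal := ⟨habove⟩
  have : w.asIdeal.LiesOver pG.asIdeal := ⟨hw⟩
  have : w.asIdeal.LiesOver pK.asIdeal := .trans w.asIdeal pG.asIdeal pK.asIdeal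
  have hfE : Ideal.inertiaDeg' pK.asIdeal pE ∣ Module.finrank K E :=
    inertiaDeg'_dvd_finrank _ _
  have hfG : Ideal.inertiaDeg' pK.asIdeal pE ∣ Module.finrank K G :=
    (Ideal.inertiaDeg'_dvd_of_inertiaDeg'_eq_one _ _ _ w.asIdeal hdeg).trans
      (inertiaDeg'_dvd_finrank _ _)
  exact hnodeg1 ⟨pE, inferInstance, Ideal.under_ne_bot (𝓞 E) w.ne_bot⟩ (pE.over_def pK.asIdeal) (Nat.eq_one_of_dvd_coprimes hcop hfE hfG)

/-- Let `K` be a number field and `E, G` two nontrivial Galois extensions of `K`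
of coprime degrees.  Let `𝔭_K` be a prime of `K` with no factor of relative degree one in `E`,
and `𝔭_G` a prime of `G` above `𝔭_K`.  Then `𝔭_G` has no factor of relative degree one in the
compositum `GE` (realized as a field `L` generated by the images of `E` and `G`). -/
theorem stmt9 (K E G L : Type*) [Field K] [Field E] [Field G] [Field L]
    [NumberField K] [NumberField E] [NumberField G] [NumberField L]
    [Algebra K E] [Algebra K G] [Algebra K L] [Algebra E L] [Algebra G L]
    [IsScalarTower K E L] [IsScalarTower K G L]
    [IsGalois K E] [IsGalois K G]
    (hE : 1 < Module.finrank K E) (hG : 1 < Module.finrank K G)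
    (hcop : Nat.Coprime (Module.finrank K E) (Module.finrank K G))
    (hcomp : (IsScalarTower.toAlgHom K E L).range ⊔ (IsScalarTower.toAlgHom K G L).range =
      (⊤ : Subalgebra K L))
    (pK : HeightOneSpectrum (𝓞 K))
    (hnodeg1 : ∀ w : HeightOneSpectrum (𝓞 E),
      pK.asIdeal = Ideal.comap (algebraMap (𝓞 K) (𝓞 E)) w.asIdeal →
      Ideal.inertiaDeg' pK.asIdeal w.asIdeal ≠ 1)
    (pG : HeightOneSpectrum (𝓞 G))
    (habove : pK.asIdeal = Ideal.comap (algebraMap (𝓞 K) (𝓞 G)) pG.asIdeal) :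
    ∀ w : HeightOneSpectrum (𝓞 L),
      pG.asIdeal = Ideal.comap (algebraMap (𝓞 G) (𝓞 L)) w.asIdeal →
      Ideal.inertiaDeg' pG.asIdeal w.asIdeal ≠ 1 :=
  stmt9_general K E G L hcop pK hnodeg1 pG habove
end
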